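/- Let (M,g) be a closed Riemannian manifold, φ_λ a nontrivial eigenfunction of the Laplacian with eigenvalue λ > 0, and Ω a nodal domain of φ_λ, i.e. a connected component of M \ φ_λ^{-1}(0). Then for every r > 0 one has m_g(Ω \ B_r(∂Ω)) ≤ exp(1 − √λ · r) · m_g(Ω), where ∂Ω is the topological boundary of Ω. -/

import Mathlib

/-!
STATEMENT 7.
`(M,g)` a closed Riemannian manifold, `φ_λ` a nontrivial eigenfunction of the
Laplacian with eigenvalue `λ > 0`, `Ω` a nodal domain of `φ_λ` (a connected
component of `M \ φ_λ⁻¹(0)`).  Then for every `r > 0`,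
`m_g(Ω \ B_r(∂Ω)) ≤ exp(1 − √λ · r) · m_g(Ω)`, with `∂Ω` the topological
boundary of `Ω`.

Encoding.  `M` is a compact connected metric space carrying the Riemannian
distance `d_g`, and `m` is the normalized Riemannian volume probability measure
`m_g = v_g / v_g(M)`.  The pointwise norm of the gradient `‖∇ψ‖(x)` of a
Lipschitz function is its metric slope `gradNorm ψ x`.  That `φ` is a (smooth,
nonzero) eigenfunction with `Δφ = λφ` is encoded in `IsLaplaceEigenfunction`,
via the classical fact (recalled in the paper) that `λ` coincides with the
first Dirichlet eigenvalue of every nodal domain of `φ`, the latter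
characterized by the variational (Rayleigh quotient) min-max principle.
`B_r(A) = {x : d_g(x,A) ≤ r}` is `Metric.cthickening r A`, and `∂Ω` is
`frontier Ω`.
-/

open MeasureTheory Metric Topology Filter

/-- The metric slope (pointwise local Lipschitz constant) of `f` at `x`:
for a Lipschitz function on a Riemannian manifold this is the norm of the
gradient `‖∇f‖(x)` at a.e. point. -/
noncomputable def gradNorm {X : Type*} [MetricSpace X] (f : X → ℝ) (x : X) : ℝ :=
  limsup (fun y => |f y - f x| / dist y x) (𝓝[≠] x)

/-- `Ω` is a nodal domain of `φ`, i.e. a connected component of `{φ ≠ 0}`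
(equivalently, of the complement of the nodal set `φ⁻¹(0)`). -/
def IsNodalDomain {X : Type*} [TopologicalSpace X] (φ : X → ℝ) (Ω : Set X) : Prop :=
  ∃ x, φ x ≠ 0 ∧ Ω = connectedComponentIn {y | φ y ≠ 0} x

/-- `φ` is a nontrivial eigenfunction of the Laplace–Beltrami operator with
eigenvalue `lam` (`Δφ = lam·φ`, `φ ≠ 0`), encoded through the classical fact
that `lam` equals the first Dirichlet eigenvalue of every nodal domain of `φ`,
the latter characterized by the variational (Rayleigh quotient) principle:
`lam` is the least value of `∫_Ω ‖∇ψ‖² dm / ∫_Ω ψ² dm` over nonzero Lipschitz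
functions `ψ` vanishing outside the nodal domain `Ω`. -/
def IsLaplaceEigenfunction {M : Type*} [MetricSpace M] [MeasurableSpace M]
    (m : MeasureTheory.Measure M) (lam : ℝ) (φ : M → ℝ) : Prop :=
  Continuous φ ∧ φ ≠ 0 ∧
    ∀ Ω : Set M, IsNodalDomain φ Ω →
      IsLeast {q : ℝ | ∃ ψ : M → ℝ, (∃ K, LipschitzWith K ψ) ∧ (∀ x ∉ Ω, ψ x = 0) ∧
        (∫ x in Ω, ψ x ^ 2 ∂m) ≠ 0 ∧
        q = (∫ x in Ω, gradNorm ψ x ^ 2 ∂m) / (∫ x in Ω, ψ x ^ 2 ∂m)} lam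

lemma real_sInf_univ' : sInf (Set.univ : Set ℝ) = 0 :=
  Real.sInf_of_not_bddBelow (fun ⟨b, hb⟩ => by
    have := hb (Set.mem_univ (b - 1)); simp at this; linarith)

lemma gradNorm_le_of_eventually {X : Type*} [MetricSpace X] {f : X → ℝ} {x : X} {C : ℝ}
    (hC : 0 ≤ C) (h : ∀ᶠ y in 𝓝[≠] x, |f y - f x| / dist y x ≤ C) : gradNorm f x ≤ C := by
  rw [gradNorm, Filter.limsup_eq]
  rcases Filter.eq_or_neBot (𝓝[≠] x) with hbot | hne
  · rw [hbot]
    simp only [Filter.eventually_bot, Set.setOf_true]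
    rw [real_sInf_univ']; exact hC
  · refine csInf_le ⟨0, fun a ha => ?_⟩ h
    simp only [Set.mem_setOf_eq] at ha
    obtain ⟨y, hy⟩ := ha.exists
    exact le_trans (div_nonneg (abs_nonneg _) dist_nonneg) hy

lemma gradNorm_nonneg' {X : Type*} [MetricSpace X] (f : X → ℝ) (x : X) : 0 ≤ gradNorm f x := by
  rw [gradNorm, Filter.limsup_eq]
  rcases Filter.eq_or_neBot (𝓝[≠] x) with hbot | hne
  · rw [hbot]
    simp only [Filter.eventually_bot, Set.setOf_true]
    rw [real_sInf_univ']
  · refine Real.sInf_nonneg (fun a ha => ?_)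
    simp only [Set.mem_setOf_eq] at ha
    obtain ⟨y, hy⟩ := ha.exists
    exact le_trans (div_nonneg (abs_nonneg _) dist_nonneg) hy

lemma exp_sub_exp_le' {u v C : ℝ} (hu : u ≤ C) (hv : v ≤ C) :
    |Real.exp u - Real.exp v| ≤ Real.exp C * |u - v| := by
  wlog h : v ≤ u generalizing u v
  · rw [abs_sub_comm, abs_sub_comm u v]; exact this hv hu (le_of_not_ge h)
  have h1 : Real.exp v ≤ Real.exp u := Real.exp_le_exp.2 h
  rw [abs_of_nonneg (by linarith), abs_of_nonneg (by linarith)]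
  have h2 : 1 - (u - v) ≤ Real.exp (v - u) := by
    have := Real.add_one_le_exp (v - u); linarith
  have h3 : Real.exp (v - u) * Real.exp u = Real.exp v := by
    rw [← Real.exp_add]; ring_nf
  have key : Real.exp u - Real.exp v ≤ Real.exp u * (u - v) := by
    nlinarith [Real.exp_pos u]
  have h4 : Real.exp u * (u - v) ≤ Real.exp C * (u - v) := by
    have := Real.exp_le_exp.2 hu
    nlinarith
  linarith

lemma exp_one_sub_le' {t : ℝ} (ht : 0 ≤ t) : Real.exp t - 1 ≤ t * Real.exp t := by
  have h2 : 1 - t ≤ Real.exp (-t) := by have := Real.add_one_le_exp (-t); linarith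
  have h3 : Real.exp (-t) * Real.exp t = 1 := by rw [← Real.exp_add]; simp
  nlinarith [Real.exp_pos t]

lemma clamp_lip' {s' r' : ℝ} (t u : ℝ) :
    |min (max (t - s') 0) (r' - s') - min (max (u - s') 0) (r' - s')| ≤ |t - u| := by
  calc |min (max (t - s') 0) (r' - s') - min (max (u - s') 0) (r' - s')|
      ≤ max |max (t - s') 0 - max (u - s') 0| |(r' - s') - (r' - s')| :=
        abs_min_sub_min_le_max _ _ _ _
    _ = |max (t - s') 0 - max (u - s') 0| := by simp
    _ ≤ |(t - s') - (u - s')| := abs_max_sub_max_le_abs _ _ _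
    _ = |t - u| := by ring_nf

set_option maxHeartbeats 1000000 in
theorem nodal_domain_concentration
    {M : Type*} [MetricSpace M] [CompactSpace M] [ConnectedSpace M] [Nonempty M]
    [MeasurableSpace M] [BorelSpace M]
    (m : Measure M) [IsProbabilityMeasure m]
    (lam : ℝ) (hlam : 0 < lam) (φ : M → ℝ)
    (heig : IsLaplaceEigenfunction m lam φ)
    (Ω : Set M) (hΩ : IsNodalDomain φ Ω) :
    ∀ r > (0 : ℝ),
      m (Ω \ cthickening r (frontier Ω)) ≤
        ENNReal.ofReal (Real.exp (1 - Real.sqrt lam * r)) * m Ω := by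
  classical
  obtain ⟨hφcont, -, hmin⟩ := heig
  obtain ⟨x₀, hx₀, hΩdef⟩ := hΩ
  have hU : IsOpen {y | φ y ≠ 0} := isOpen_compl_iff.mpr (isClosed_eq hφcont continuous_const)
  have hx₀Ω : x₀ ∈ Ω := hΩdef ▸ mem_connectedComponentIn hx₀
  have hΩmeas : MeasurableSet Ω := by
    rw [hΩdef, connectedComponentIn_eq_image (show x₀ ∈ {y | φ y ≠ 0} from hx₀)]
    obtain ⟨Z, hZc, hZ⟩ := isClosed_induced_iff.mp
      (isClosed_connectedComponent (x := (⟨x₀, hx₀⟩ : {y | φ y ≠ 0})))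
    rw [← hZ, Subtype.image_preimage_val]
    exact hU.measurableSet.inter hZc.measurableSet
  have hLeast := hmin Ω ⟨x₀, hx₀, hΩdef⟩
  intro r hr
  by_cases hfr : frontier Ω = ∅
  · exfalso
    have hΩuniv : Ω = Set.univ :=
      (isClopen_iff_frontier_eq_empty.mpr hfr).eq_univ ⟨x₀, hx₀Ω⟩
    have hgn : ∀ x : M, gradNorm (fun _ : M => (1:ℝ)) x = 0 := fun x =>
      le_antisymm
        (gradNorm_le_of_eventually le_rfl (Filter.Eventually.of_forall fun y => by simp))
        (gradNorm_nonneg' _ _)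
    have hden : (∫ x in Ω, (fun _ : M => (1:ℝ)) x ^ 2 ∂m) = 1 := by
      simp [hΩuniv]
    have hmem : (0:ℝ) ∈ {q : ℝ | ∃ ψ : M → ℝ, (∃ K, LipschitzWith K ψ) ∧
        (∀ x ∉ Ω, ψ x = 0) ∧ (∫ x in Ω, ψ x ^ 2 ∂m) ≠ 0 ∧
        q = (∫ x in Ω, gradNorm ψ x ^ 2 ∂m) / (∫ x in Ω, ψ x ^ 2 ∂m)} := by
      refine ⟨fun _ => 1, ⟨0, LipschitzWith.const (α := M) (1:ℝ)⟩,
        fun x hx => absurd (hΩuniv ▸ Set.mem_univ x) hx, by rw [hden]; norm_num, ?_⟩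
      have : (∫ x in Ω, gradNorm (fun _ : M => (1:ℝ)) x ^ 2 ∂m) = 0 := by
        have he : (fun x => gradNorm (fun _ : M => (1:ℝ)) x ^ 2) = fun _ => (0:ℝ) := by
          funext x; rw [hgn x]; ring
        rw [he, integral_zero]
      rw [this, zero_div]
    have := hLeast.2 hmem
    linarith

  · -- main case: frontier nonempty
    have hfrne : (frontier Ω).Nonempty := Set.nonempty_iff_ne_empty.2 hfr
    set a := Real.sqrt lam with ha_def
    have ha : 0 < a := Real.sqrt_pos.2 hlam
    have ha2 : a ^ 2 = lam := Real.sq_sqrt hlam.le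
    set s := min r (1 / a) / 4 with hs_def
    have hs_pos : 0 < s := by
      have h1 : 0 < min r (1 / a) := lt_min hr (by positivity)
      positivity
    have hsr : s < r := by
      have h1 : min r (1 / a) ≤ r := min_le_left _ _
      have : s ≤ r / 4 := by rw [hs_def]; linarith
      linarith
    have has : a * s ≤ 1 / 4 := by
      have h1 : min r (1 / a) ≤ 1 / a := min_le_right _ _
      have h2 : a * min r (1 / a) ≤ a * (1 / a) := by
        exact mul_le_mul_of_nonneg_left h1 ha.le
      have h3 : a * (1 / a) = 1 := by field_simp
      rw [hs_def]
      calc a * (min r (1 / a) / 4) = a * min r (1 / a) / 4 := by ring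
        _ ≤ 1 / 4 := by rw [h3] at h2; linarith
    set D : M → ℝ := fun x => infDist x (frontier Ω) with hD_def
    have hD_cont : Continuous D := continuous_infDist_pt _
    have hD_lip : ∀ x y : M, |D x - D y| ≤ dist x y := by
      intro x y
      rw [abs_sub_le_iff]
      constructor
      · have := Metric.infDist_le_infDist_add_dist (x := x) (y := y) (s := frontier Ω)
        simp only [hD_def]; linarith
      · have := Metric.infDist_le_infDist_add_dist (x := y) (y := x) (s := frontier Ω)
        rw [dist_comm] at this
        simp only [hD_def]; linarith
    set T' : Set M := {x | r < D x} with hT'_def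
    have hT'meas : MeasurableSet T' := (isOpen_lt continuous_const hD_cont).measurableSet
    have hle_meas : MeasurableSet {x | D x ≤ r} := (isClosed_le hD_cont continuous_const).measurableSet
    have hS_sub : Ω \ cthickening r (frontier Ω) ⊆ Ω ∩ T' := by
      rintro x ⟨hx1, hx2⟩
      refine ⟨hx1, ?_⟩
      rw [Metric.mem_cthickening_iff, not_le] at hx2
      show r < D x
      have hne : EMetric.infEdist x (frontier Ω) ≠ ⊤ := Metric.infEdist_ne_top hfrne
      have : (ENNReal.ofReal r).toReal < (EMetric.infEdist x (frontier Ω)).toReal :=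
        (ENNReal.toReal_lt_toReal ENNReal.ofReal_ne_top hne).2 hx2
      rwa [ENNReal.toReal_ofReal hr.le] at this
    by_cases hT0 : m (Ω ∩ T') = 0
    · calc m (Ω \ cthickening r (frontier Ω)) ≤ m (Ω ∩ T') := measure_mono hS_sub
        _ = 0 := hT0
        _ ≤ _ := zero_le
    -- gap lemma
    have hgap : ∃ ε > (0:ℝ), ∀ x ∈ Ω, s ≤ D x → ∀ y, y ∉ Ω → ε ≤ dist x y := by
      by_cases hcompl : Ωᶜ = ∅
      · refine ⟨1, one_pos, fun x _ _ y hy => absurd ?_ hy⟩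
        have : y ∈ Ωᶜ → False := fun h => by rw [hcompl] at h; exact h
        by_contra hyn
        exact this hyn
      · have hcne : (Ωᶜ : Set M).Nonempty := Set.nonempty_iff_ne_empty.2 hcompl
        set K : Set M := closure Ω ∩ {x | s ≤ D x} with hK_def
        have hKclosed : IsClosed K :=
          isClosed_closure.inter (isClosed_le continuous_const hD_cont)
        have hKΩ : K ⊆ Ω := by
          rintro z ⟨hz1, hz2⟩
          by_contra hzΩ
          have hzf : z ∈ frontier Ω :=
            ⟨hz1, fun hzi => hzΩ (interior_subset hzi)⟩
          have : D z = 0 := Metric.infDist_zero_of_mem hzf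
          have hz2' : s ≤ D z := hz2
          linarith
        have hKdisj : ∀ z ∈ K, z ∉ closure (Ωᶜ : Set M) := by
          intro z hz hzc
          have hzf : z ∈ frontier Ω := by
            rw [frontier_eq_closure_inter_closure]; exact ⟨hz.1, hzc⟩
          have : D z = 0 := Metric.infDist_zero_of_mem hzf
          have hz2' : s ≤ D z := hz.2
          linarith
        rcases K.eq_empty_or_nonempty with hKe | hKne
        · refine ⟨1, one_pos, fun x hx hsx y hy => ?_⟩
          exact absurd (show x ∈ K from ⟨subset_closure hx, hsx⟩)
            (by rw [hKe]; exact Set.notMem_empty x)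
        · obtain ⟨z₀, hz₀K, hz₀min⟩ := hKclosed.isCompact.exists_isMinOn hKne
            ((continuous_infDist_pt (Ωᶜ : Set M)).continuousOn)
          have hε0 : 0 < infDist z₀ Ωᶜ := by
            rcases (Metric.infDist_nonneg (s := (Ωᶜ : Set M)) (x := z₀)).lt_or_eq with h | h
            · exact h
            · exfalso
              exact hKdisj z₀ hz₀K ((Metric.mem_closure_iff_infDist_zero hcne).2 h.symm)
          refine ⟨infDist z₀ Ωᶜ, hε0, fun x hx hsx y hy => ?_⟩
          have hxK : x ∈ K := ⟨subset_closure hx, hsx⟩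
          exact le_trans (hz₀min hxK) (Metric.infDist_le_dist_of_mem hy)
    obtain ⟨ε, hε, hgap⟩ := hgap
    -- the test function
    set c : ℝ → ℝ := fun t => min (max (t - s) 0) (r - s) with hc_def
    have hc_nonneg : ∀ t, 0 ≤ c t := fun t => le_min (le_max_right _ _) (by linarith)
    have hc_le : ∀ t, c t ≤ r - s := fun t => min_le_right _ _
    have hc_lip : ∀ t u, |c t - c u| ≤ |t - u| := fun t u => clamp_lip' t u
    have hc_cont : Continuous c :=
      (((continuous_id.sub continuous_const).max continuous_const).min continuous_const)
    have hc_high : ∀ t, r ≤ t → c t = r - s := by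
      intro t ht
      have h1 : max (t - s) 0 = t - s := max_eq_left (by linarith)
      simp only [hc_def]
      rw [h1]
      exact min_eq_right (by linarith)
    have hc_low : ∀ t, t ≤ s → c t = 0 := by
      intro t ht
      have h1 : max (t - s) 0 = 0 := max_eq_right (by linarith)
      simp only [hc_def]
      rw [h1]
      exact min_eq_left (by linarith)
    set xb := Real.exp (a * (r - s)) with hxb_def
    have hxb1 : 1 < xb := by
      rw [hxb_def, ← Real.exp_zero]
      exact Real.exp_lt_exp.2 (by nlinarith)
    set P := xb - 1 with hP_def
    have hP : 0 < P := by rw [hP_def]; linarith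
    set ψ : M → ℝ := fun x => if x ∈ Ω then Real.exp (a * c (D x)) - 1 else 0 with hψ_def
    have hψΩ : ∀ x ∈ Ω, ψ x = Real.exp (a * c (D x)) - 1 := fun x hx => if_pos hx
    have hψ0 : ∀ x ∉ Ω, ψ x = 0 := fun x hx => if_neg hx
    have hψ_nonneg : ∀ x, 0 ≤ ψ x := by
      intro x
      by_cases hx : x ∈ Ω
      · rw [hψΩ x hx]
        have : 1 ≤ Real.exp (a * c (D x)) :=
          Real.one_le_exp (by nlinarith [hc_nonneg (D x)])
        linarith
      · rw [hψ0 x hx]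
    have hψ_le : ∀ x, ψ x ≤ P := by
      intro x
      by_cases hx : x ∈ Ω
      · rw [hψΩ x hx, hP_def, hxb_def]
        have h1 : a * c (D x) ≤ a * (r - s) := mul_le_mul_of_nonneg_left (hc_le _) ha.le
        have := Real.exp_le_exp.2 h1
        linarith
      · rw [hψ0 x hx]; linarith
    have hψ_lip : ∃ K : NNReal, LipschitzWith K ψ := by
      set C := max (a * xb) (P / ε) with hC_def
      have hC0 : 0 ≤ C := le_trans (by positivity) (le_max_left _ _)
      have dir : ∀ p q : M, ψ p - ψ q ≤ C * dist p q := by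
        intro p q
        by_cases hp : p ∈ Ω
        · by_cases hq : q ∈ Ω
          · rw [hψΩ p hp, hψΩ q hq]
            have h1 : |Real.exp (a * c (D p)) - Real.exp (a * c (D q))|
                ≤ Real.exp (a * (r - s)) * |a * c (D p) - a * c (D q)| :=
              exp_sub_exp_le' (mul_le_mul_of_nonneg_left (hc_le _) ha.le)
                (mul_le_mul_of_nonneg_left (hc_le _) ha.le)
            have h2 : |a * c (D p) - a * c (D q)| = a * |c (D p) - c (D q)| := by
              rw [← mul_sub, abs_mul, abs_of_nonneg ha.le]
            have h3 : |c (D p) - c (D q)| ≤ dist p q := le_trans (hc_lip _ _) (hD_lip p q)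
            have h4 : Real.exp (a * c (D p)) - 1 - (Real.exp (a * c (D q)) - 1)
                ≤ |Real.exp (a * c (D p)) - Real.exp (a * c (D q))| := by
              have := le_abs_self (Real.exp (a * c (D p)) - Real.exp (a * c (D q)))
              linarith
            have h5 : Real.exp (a * (r - s)) * (a * |c (D p) - c (D q)|)
                ≤ xb * (a * dist p q) := by
              rw [hxb_def]
              have := mul_le_mul_of_nonneg_left h3 ha.le
              nlinarith [Real.exp_pos (a * (r - s))]
            have h6 : xb * (a * dist p q) ≤ C * dist p q := by
              have : xb * (a * dist p q) = (a * xb) * dist p q := by ring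
              rw [this]
              exact mul_le_mul_of_nonneg_right (le_max_left _ _) dist_nonneg
            rw [h2] at h1
            linarith
          · rw [hψ0 q hq]
            by_cases hps : s ≤ D p
            · have h1 : ε ≤ dist p q := hgap p hp hps q hq
              have h2 : ψ p ≤ P := hψ_le p
              have h3 : P = (P / ε) * ε := by field_simp
              have h4 : (P / ε) * ε ≤ (P / ε) * dist p q :=
                mul_le_mul_of_nonneg_left h1 (by positivity)
              have h5 : (P / ε) * dist p q ≤ C * dist p q :=
                mul_le_mul_of_nonneg_right (le_max_right _ _) dist_nonneg
              linarith
            · have : c (D p) = 0 := hc_low _ (le_of_not_ge hps)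
              rw [hψΩ p hp, this]
              simp only [mul_zero, Real.exp_zero]
              have := mul_nonneg hC0 (dist_nonneg (x := p) (y := q))
              linarith
        · rw [hψ0 p hp]
          have h1 := hψ_nonneg q
          have h2 : (0:ℝ) ≤ C * dist p q := mul_nonneg hC0 dist_nonneg
          linarith
      refine ⟨⟨C, hC0⟩, LipschitzWith.of_dist_le_mul fun x y => ?_⟩
      rw [Real.dist_eq, abs_sub_le_iff]
      exact ⟨dir x y, by rw [dist_comm]; exact dir y x⟩
    -- pointwise gradient bound
    set H : M → ℝ := fun x => if s ≤ D x ∧ D x ≤ r then Real.exp (a * c (D x)) else 0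
      with hH_def
    have hH_nonneg : ∀ x, 0 ≤ H x := by
      intro x; simp only [hH_def]; split
      · exact (Real.exp_pos _).le
      · exact le_rfl
    have hH_le : ∀ x, H x ≤ xb := by
      intro x; simp only [hH_def]; split
      · rw [hxb_def]
        exact Real.exp_le_exp.2 (mul_le_mul_of_nonneg_left (hc_le _) ha.le)
      · linarith
    have hgrad : ∀ x ∈ Ω, gradNorm ψ x ≤ a * H x := by
      intro x hx
      rcases lt_or_ge (D x) s with hds | hds
      · have hHx : H x = 0 := if_neg (fun h => absurd h.1 (not_le.2 hds))
        rw [hHx, mul_zero]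
        apply gradNorm_le_of_eventually le_rfl
        have hψx : ψ x = 0 := by
          rw [hψΩ x hx, hc_low _ hds.le]; simp
        have hev : ∀ᶠ y in 𝓝 x, ψ y = ψ x := by
          rw [Metric.eventually_nhds_iff]
          refine ⟨s - D x, by linarith, fun y hy => ?_⟩
          rw [hψx]
          by_cases hyΩ : y ∈ Ω
          · have hDy : D y < s := by
              have := hD_lip y x
              have := le_abs_self (D y - D x)
              linarith
            rw [hψΩ y hyΩ, hc_low _ hDy.le]; simp
          · exact hψ0 y hyΩ
        exact (hev.filter_mono nhdsWithin_le_nhds).mono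
          (fun y hy => by rw [hy, sub_self, abs_zero, zero_div])
      rcases le_or_gt (D x) r with hdr | hdr
      · -- strip
        have hHx : H x = Real.exp (a * c (D x)) := if_pos ⟨hds, hdr⟩
        rw [hHx]
        set E := Real.exp (a * c (D x)) with hE_def
        have hE1 : 1 ≤ E := Real.one_le_exp (by nlinarith [hc_nonneg (D x)])
        have main : ∀ ε' > (0:ℝ), gradNorm ψ x ≤ a * E + ε' := by
          intro ε' hε'
          set δ := min (ε / 2) (min 1 (ε' / (a * a * E * Real.exp a + 1))) with hδ_def
          have hδpos : 0 < δ := by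
            apply lt_min (by positivity)
            apply lt_min one_pos
            positivity
          have hδ1 : δ ≤ 1 := le_trans (min_le_right _ _) (min_le_left _ _)
          have hδε' : δ ≤ ε' / (a * a * E * Real.exp a + 1) :=
            le_trans (min_le_right _ _) (min_le_right _ _)
          have hδε : δ ≤ ε / 2 := min_le_left _ _
          apply gradNorm_le_of_eventually (by positivity)
          rw [eventually_nhdsWithin_iff, Metric.eventually_nhds_iff]
          refine ⟨δ, hδpos, fun y hy hyne => ?_⟩
          have hyne' : y ≠ x := by simpa using hyne
          have hyΩ : y ∈ Ω := by
            by_contra hyn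
            have h1 := hgap x hx hds y hyn
            rw [dist_comm] at hy
            linarith
          have hdist0 : 0 < dist y x := dist_pos.2 hyne'
          have hcy : c (D y) ≤ c (D x) + δ := by
            have h1 : |c (D y) - c (D x)| ≤ |D y - D x| := hc_lip _ _
            have h2 : |D y - D x| ≤ dist y x := hD_lip y x
            have h3 := le_abs_self (c (D y) - c (D x))
            linarith
          have hq : |ψ y - ψ x| ≤ Real.exp (a * (c (D x) + δ)) * (a * dist y x) := by
            rw [hψΩ y hyΩ, hψΩ x hx]
            have e1 : Real.exp (a * c (D y)) - 1 - (Real.exp (a * c (D x)) - 1)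
                = Real.exp (a * c (D y)) - Real.exp (a * c (D x)) := by ring
            rw [e1]
            have h1 : |Real.exp (a * c (D y)) - Real.exp (a * c (D x))|
                ≤ Real.exp (a * (c (D x) + δ)) * |a * c (D y) - a * c (D x)| :=
              exp_sub_exp_le' (mul_le_mul_of_nonneg_left hcy ha.le)
                (mul_le_mul_of_nonneg_left (by linarith) ha.le)
            have h2 : |a * c (D y) - a * c (D x)| = a * |c (D y) - c (D x)| := by
              rw [← mul_sub, abs_mul, abs_of_nonneg ha.le]
            have h3 : |c (D y) - c (D x)| ≤ dist y x :=
              le_trans (hc_lip _ _) (hD_lip y x)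
            rw [h2] at h1
            have h4 : Real.exp (a * (c (D x) + δ)) * (a * |c (D y) - c (D x)|)
                ≤ Real.exp (a * (c (D x) + δ)) * (a * dist y x) := by
              have := mul_le_mul_of_nonneg_left h3 ha.le
              exact mul_le_mul_of_nonneg_left this (Real.exp_pos _).le
            linarith
          have hquot : |ψ y - ψ x| / dist y x ≤ Real.exp (a * (c (D x) + δ)) * a := by
            rw [div_le_iff₀ hdist0]
            calc |ψ y - ψ x| ≤ Real.exp (a * (c (D x) + δ)) * (a * dist y x) := hq
              _ = Real.exp (a * (c (D x) + δ)) * a * dist y x := by ring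
          have hsplit : Real.exp (a * (c (D x) + δ)) = E * Real.exp (a * δ) := by
            rw [hE_def, ← Real.exp_add]; ring_nf
          have hbound : E * Real.exp (a * δ) * a ≤ a * E + ε' := by
            have h1 : Real.exp (a * δ) - 1 ≤ (a * δ) * Real.exp (a * δ) :=
              exp_one_sub_le' (by positivity)
            have h2 : Real.exp (a * δ) ≤ Real.exp a :=
              Real.exp_le_exp.2 (by nlinarith)
            have h3 : a * a * E * Real.exp a + 1 > 0 := by positivity
            have h4 : δ * (a * a * E * Real.exp a + 1) ≤ ε' := by
              rw [le_div_iff₀ h3] at hδε'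
              linarith
            have h5 : a * E * (Real.exp (a * δ) - 1) ≤ ε' := by
              have e1 : a * E * (Real.exp (a * δ) - 1) ≤ a * E * ((a * δ) * Real.exp (a * δ)) := by
                apply mul_le_mul_of_nonneg_left h1 (by positivity)
              have e2 : a * E * ((a * δ) * Real.exp (a * δ)) ≤ a * E * ((a * δ) * Real.exp a) := by
                apply mul_le_mul_of_nonneg_left _ (by positivity)
                exact mul_le_mul_of_nonneg_left h2 (by positivity)
              have e3 : a * E * ((a * δ) * Real.exp a) = δ * (a * a * E * Real.exp a) := by ring
              nlinarith [hδpos]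
            nlinarith
          calc |ψ y - ψ x| / dist y x ≤ Real.exp (a * (c (D x) + δ)) * a := hquot
            _ = E * Real.exp (a * δ) * a := by rw [hsplit]
            _ ≤ a * E + ε' := hbound
        by_contra hcon
        push_neg at hcon
        obtain ⟨ε', hε'1, hε'2⟩ : ∃ ε' > (0:ℝ), a * E + ε' < gradNorm ψ x :=
          ⟨(gradNorm ψ x - a * E) / 2, by linarith, by linarith⟩
        exact absurd (main ε' hε'1) (not_le.2 hε'2)
      · -- deep plateau
        have hHx : H x = 0 := if_neg (fun h => absurd h.2 (not_le.2 hdr))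
        rw [hHx, mul_zero]
        apply gradNorm_le_of_eventually le_rfl
        have hev : ∀ᶠ y in 𝓝 x, ψ y = ψ x := by
          rw [Metric.eventually_nhds_iff]
          refine ⟨min ε (D x - r), lt_min hε (by linarith), fun y hy => ?_⟩
          have hyΩ : y ∈ Ω := by
            by_contra hyn
            have h1 := hgap x hx (by linarith) y hyn
            rw [dist_comm] at hy
            have := lt_of_lt_of_le hy (min_le_left _ _)
            linarith
          have hDy : r ≤ D y := by
            have h1 := hD_lip x y
            have h2 := le_abs_self (D x - D y)
            have h3 : dist y x < D x - r := lt_of_lt_of_le hy (min_le_right _ _)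
            rw [dist_comm] at h3
            linarith
          rw [hψΩ y hyΩ, hψΩ x hx, hc_high _ hDy, hc_high _ hdr.le]
        exact (hev.filter_mono nhdsWithin_le_nhds).mono
          (fun y hy => by rw [hy, sub_self, abs_zero, zero_div])
    -- integrability facts
    obtain ⟨K₀, hK₀⟩ := hψ_lip
    have hψcont : Continuous ψ := hK₀.continuous
    have hψ2_int : Integrable (fun x => ψ x ^ 2) (m.restrict Ω) := by
      refine ⟨((hψcont.pow 2).aestronglyMeasurable), ?_⟩
      apply HasFiniteIntegral.of_bounded (C := P ^ 2)
      apply ae_of_all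
      intro x
      rw [Real.norm_eq_abs, abs_of_nonneg (sq_nonneg _)]
      exact pow_le_pow_left₀ (hψ_nonneg x) (hψ_le x) 2
    have hH_meas : Measurable H := by
      apply Measurable.ite
      · exact ((isClosed_le continuous_const hD_cont).inter
          (isClosed_le hD_cont continuous_const)).measurableSet
      · exact (Real.continuous_exp.comp (continuous_const.mul (hc_cont.comp hD_cont))).measurable
      · exact measurable_const
    have haH2_int : Integrable (fun x => (a * H x) ^ 2) (m.restrict Ω) := by
      refine ⟨((hH_meas.const_mul a).pow_const 2).aestronglyMeasurable, ?_⟩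
      apply HasFiniteIntegral.of_bounded (C := (a * xb) ^ 2)
      apply ae_of_all
      intro x
      rw [Real.norm_eq_abs, abs_of_nonneg (sq_nonneg _)]
      exact pow_le_pow_left₀ (mul_nonneg ha.le (hH_nonneg x))
        (mul_le_mul_of_nonneg_left (hH_le x) ha.le) 2
    have hH2_int : Integrable (fun x => H x ^ 2) (m.restrict Ω) := by
      refine ⟨(hH_meas.pow_const 2).aestronglyMeasurable, ?_⟩
      apply HasFiniteIntegral.of_bounded (C := xb ^ 2)
      apply ae_of_all
      intro x
      rw [Real.norm_eq_abs, abs_of_nonneg (sq_nonneg _)]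
      exact pow_le_pow_left₀ (hH_nonneg x) (hH_le x) 2
    -- denominator positivity
    have hFpos : 0 < (m (Ω ∩ T')).toReal :=
      ENNReal.toReal_pos hT0 (measure_ne_top m _)
    have hψT : ∀ x ∈ Ω ∩ T', ψ x = P := by
      rintro x ⟨h1, h2⟩
      rw [hψΩ x h1, hc_high _ (le_of_lt h2), hP_def, hxb_def]
    have hIndInt : ∫ x in Ω, T'.indicator (fun _ => P ^ 2) x ∂m
        = P ^ 2 * (m (Ω ∩ T')).toReal := by
      rw [integral_indicator_const _ hT'meas, measureReal_def, Measure.restrict_apply hT'meas,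
        Set.inter_comm, smul_eq_mul, mul_comm]
    have hDq_lb : P ^ 2 * (m (Ω ∩ T')).toReal ≤ ∫ x in Ω, ψ x ^ 2 ∂m := by
      rw [← hIndInt]
      apply integral_mono_ae ((integrable_const _).indicator hT'meas) hψ2_int
      filter_upwards [ae_restrict_mem hΩmeas] with x hxΩ
      by_cases hxT : x ∈ T'
      · rw [Set.indicator_of_mem hxT, hψT x ⟨hxΩ, hxT⟩]
      · rw [Set.indicator_of_notMem hxT]
        exact sq_nonneg _
    have hDq_pos : 0 < ∫ x in Ω, ψ x ^ 2 ∂m :=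
      lt_of_lt_of_le (by positivity) hDq_lb
    -- Rayleigh quotient lower bound
    have hray : lam * ∫ x in Ω, ψ x ^ 2 ∂m ≤ ∫ x in Ω, gradNorm ψ x ^ 2 ∂m := by
      have hmem2 := hLeast.2 ⟨ψ, ⟨K₀, hK₀⟩, hψ0, ne_of_gt hDq_pos, rfl⟩
      exact (le_div_iff₀ hDq_pos).1 hmem2
    have hgrad_le : ∫ x in Ω, gradNorm ψ x ^ 2 ∂m ≤ ∫ x in Ω, (a * H x) ^ 2 ∂m := by
      by_cases hAE : AEStronglyMeasurable (fun x => gradNorm ψ x ^ 2) (m.restrict Ω)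
      · have hInt : Integrable (fun x => gradNorm ψ x ^ 2) (m.restrict Ω) := by
          refine ⟨hAE, ?_⟩
          apply HasFiniteIntegral.of_bounded (C := (a * xb) ^ 2)
          filter_upwards [ae_restrict_mem hΩmeas] with x hxΩ
          rw [Real.norm_eq_abs, abs_of_nonneg (sq_nonneg _)]
          have h1 := hgrad x hxΩ
          have h2 := gradNorm_nonneg' ψ x
          have h3 : a * H x ≤ a * xb := mul_le_mul_of_nonneg_left (hH_le x) ha.le
          nlinarith
        apply integral_mono_ae hInt haH2_int
        filter_upwards [ae_restrict_mem hΩmeas] with x hxΩ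
        have h1 := hgrad x hxΩ
        have h2 := gradNorm_nonneg' ψ x
        have h3 : 0 ≤ a * H x := mul_nonneg ha.le (hH_nonneg x)
        nlinarith
      · rw [integral_non_aestronglyMeasurable hAE]
        exact integral_nonneg (fun x => sq_nonneg _)
    have haH2 : ∫ x in Ω, (a * H x) ^ 2 ∂m = lam * ∫ x in Ω, H x ^ 2 ∂m := by
      have he : (fun x => (a * H x) ^ 2) = fun x => lam * H x ^ 2 := by
        funext x; rw [← ha2]; ring
      rw [he, integral_const_mul]
    have hψH : ∫ x in Ω, ψ x ^ 2 ∂m ≤ ∫ x in Ω, H x ^ 2 ∂m := by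
      have h1 : lam * ∫ x in Ω, ψ x ^ 2 ∂m ≤ lam * ∫ x in Ω, H x ^ 2 ∂m := by
        calc lam * ∫ x in Ω, ψ x ^ 2 ∂m ≤ ∫ x in Ω, gradNorm ψ x ^ 2 ∂m := hray
          _ ≤ ∫ x in Ω, (a * H x) ^ 2 ∂m := hgrad_le
          _ = lam * ∫ x in Ω, H x ^ 2 ∂m := haH2
      exact (mul_le_mul_iff_right₀ hlam).1 h1
    -- pointwise expansion and integration
    set G : M → ℝ := fun x =>
      Set.indicator {x | D x ≤ r} (fun _ => 2 * xb - 1) x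
        - Set.indicator T' (fun _ => P ^ 2) x with hG_def
    have hG_int : Integrable G (m.restrict Ω) :=
      ((integrable_const _).indicator hle_meas).sub ((integrable_const _).indicator hT'meas)
    have hpt : ∀ x ∈ Ω, H x ^ 2 - ψ x ^ 2 ≤ G x := by
      intro x hx
      rcases lt_or_ge (D x) s with hds | hds
      · have hHx : H x = 0 := if_neg (fun h => absurd h.1 (not_le.2 hds))
        have hψx : ψ x = 0 := by rw [hψΩ x hx, hc_low _ hds.le]; simp
        have hmem3 : x ∈ {x | D x ≤ r} := by
          show D x ≤ r; linarith
        have hnT : x ∉ T' := by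
          show ¬ r < D x; push_neg; linarith
        simp only [hG_def, Set.indicator_of_mem hmem3, Set.indicator_of_notMem hnT, hHx, hψx]
        norm_num
        linarith [hxb1]
      rcases le_or_gt (D x) r with hdr | hdr
      · have hHx : H x = Real.exp (a * c (D x)) := if_pos ⟨hds, hdr⟩
        have hψx : ψ x = Real.exp (a * c (D x)) - 1 := hψΩ x hx
        have hmem3 : x ∈ {x | D x ≤ r} := hdr
        have hnT : x ∉ T' := by
          show ¬ r < D x; push_neg; linarith
        have hEle : Real.exp (a * c (D x)) ≤ xb := by
          rw [hxb_def]
          exact Real.exp_le_exp.2 (mul_le_mul_of_nonneg_left (hc_le _) ha.le)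
        simp only [hG_def, Set.indicator_of_mem hmem3, Set.indicator_of_notMem hnT, hHx, hψx]
        nlinarith
      · have hHx : H x = 0 := if_neg (fun h => absurd h.2 (not_le.2 hdr))
        have hψx : ψ x = P := hψT x ⟨hx, hdr⟩
        have hnm : x ∉ {x | D x ≤ r} := by
          show ¬ D x ≤ r; push_neg; linarith
        have hmT : x ∈ T' := hdr
        simp only [hG_def, Set.indicator_of_notMem hnm, Set.indicator_of_mem hmT, hHx, hψx]
        norm_num
    have hGval : ∫ x in Ω, G x ∂m
        = (2 * xb - 1) * (m ({x | D x ≤ r} ∩ Ω)).toReal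
          - P ^ 2 * (m (T' ∩ Ω)).toReal := by
      rw [hG_def]
      rw [integral_sub ((integrable_const _).indicator hle_meas)
        ((integrable_const _).indicator hT'meas)]
      rw [integral_indicator_const _ hle_meas, integral_indicator_const _ hT'meas,
        measureReal_def, measureReal_def, Measure.restrict_apply hle_meas, Measure.restrict_apply hT'meas]
      simp only [smul_eq_mul]
      ring
    have hstep : 0 ≤ ∫ x in Ω, G x ∂m := by
      have h1 : 0 ≤ ∫ x in Ω, (H x ^ 2 - ψ x ^ 2) ∂m := by
        rw [integral_sub hH2_int hψ2_int]; linarith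
      have h2 : ∫ x in Ω, (H x ^ 2 - ψ x ^ 2) ∂m ≤ ∫ x in Ω, G x ∂m := by
        apply integral_mono_ae (hH2_int.sub hψ2_int) hG_int
        filter_upwards [ae_restrict_mem hΩmeas] with x hxΩ
        exact hpt x hxΩ
      linarith
    -- measure arithmetic
    set F := (m (Ω ∩ T')).toReal with hF_def
    set A := (m Ω).toReal with hA_def
    have hsplit2 : m (Ω ∩ {x | D x ≤ r}) + m (Ω ∩ T') = m Ω := by
      have h1 := measure_inter_add_diff (μ := m) Ω hle_meas
      have h2 : Ω \ {x | D x ≤ r} = Ω ∩ T' := by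
        rw [hT'_def]
        ext z
        simp only [Set.mem_diff, Set.mem_inter_iff, Set.mem_setOf_eq, not_le]
      rw [h2] at h1
      exact h1
    have hAr : (m (Ω ∩ {x | D x ≤ r})).toReal = A - F := by
      have h3 := congrArg ENNReal.toReal hsplit2
      rw [ENNReal.toReal_add (measure_ne_top m _) (measure_ne_top m _)] at h3
      rw [hA_def, hF_def]
      linarith
    have hkey : P ^ 2 * F ≤ (2 * xb - 1) * (A - F) := by
      have h1 : ∫ x in Ω, G x ∂m = (2 * xb - 1) * (A - F) - P ^ 2 * F := by
        rw [hGval, Set.inter_comm {x | D x ≤ r} Ω, Set.inter_comm T' Ω, hAr]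
      rw [h1] at hstep
      linarith
    -- numerics
    have hx2 : xb ^ 2 * F ≤ (2 * xb - 1) * A := by
      rw [hP_def] at hkey
      nlinarith [hkey]
    have h2exp : (2:ℝ) ≤ Real.exp (1 - a * s) := by
      have hlog : Real.log 2 < 0.6931471808 := Real.log_two_lt_d9
      calc (2:ℝ) = Real.exp (Real.log 2) := (Real.exp_log two_pos).symm
        _ ≤ Real.exp (1 - a * s) := Real.exp_le_exp.2 (by linarith)
    have hA0 : (0:ℝ) ≤ A := ENNReal.toReal_nonneg
    have hexp_eq : xb * Real.exp (1 - a * s) = xb ^ 2 * Real.exp (1 - a * r) := by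
      rw [hxb_def]
      rw [show Real.exp (a * (r - s)) ^ 2 = Real.exp (a * (r - s) + a * (r - s)) by
        rw [Real.exp_add]; ring]
      rw [← Real.exp_add, ← Real.exp_add]
      congr 1
      ring
    have hfinal : F ≤ Real.exp (1 - a * r) * A := by
      have h1 : 2 * xb - 1 ≤ xb * Real.exp (1 - a * s) := by nlinarith [hxb1, h2exp]
      have h2 : (2 * xb - 1) * A ≤ xb ^ 2 * Real.exp (1 - a * r) * A := by
        rw [← hexp_eq]
        exact mul_le_mul_of_nonneg_right h1 hA0
      have h3 : xb ^ 2 * F ≤ xb ^ 2 * (Real.exp (1 - a * r) * A) := by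
        calc xb ^ 2 * F ≤ (2 * xb - 1) * A := hx2
          _ ≤ xb ^ 2 * Real.exp (1 - a * r) * A := h2
          _ = xb ^ 2 * (Real.exp (1 - a * r) * A) := by ring
      have hxb2 : (0:ℝ) < xb ^ 2 := by positivity
      exact le_of_mul_le_mul_left h3 hxb2
    calc m (Ω \ cthickening r (frontier Ω)) ≤ m (Ω ∩ T') := measure_mono hS_sub
      _ = ENNReal.ofReal F := by rw [hF_def, ENNReal.ofReal_toReal (measure_ne_top m _)]
      _ ≤ ENNReal.ofReal (Real.exp (1 - a * r) * A) := ENNReal.ofReal_le_ofReal hfinal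
      _ = ENNReal.ofReal (Real.exp (1 - a * r)) * ENNReal.ofReal A :=
          ENNReal.ofReal_mul (Real.exp_pos _).le
      _ = ENNReal.ofReal (Real.exp (1 - Real.sqrt lam * r)) * m Ω := by
          rw [hA_def, ENNReal.ofReal_toReal (measure_ne_top m _), ha_def]
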